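/- If n points are in general position in the plane and every onion layer except possibly the last has at least 3 points, and the layer sizes are n_1, ..., n_k with ∑ n_i = n, then ∏_{i=1}^k f(n_i) ≤ f(1)·f(2)·31^(n/3) = O(31^(n/3)), where f(x) = (x^3 + 3x^2 + 2x + 2)/2. -/

import Mathlib

/-!
For `m ≥ 3` one has `f (m + 1) ≤ 2 f m` and `2 ≤ 31^(1/3)`, so starting from `f 3 = 31` induction
gives `f m ≤ 31^(m/3)`. Layers of size `0, 1, 2` have `f ≤ 13 ≤ f 1 * f 2 = 52`, and at most one layer is
that small, so multiplying the layer bounds gives the claim.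
-/

noncomputable def f (x : ℝ) : ℝ := (x ^ 3 + 3 * x ^ 2 + 2 * x + 2) / 2

open Finset

lemma f_pos {x : ℝ} (hx : 0 ≤ x) : 0 < f x := by
  unfold f
  positivity

lemma f_add_one_le_two_mul {x : ℝ} (hx : 3 ≤ x) : f (x + 1) ≤ 2 * f x := by
  unfold f
  nlinarith [mul_le_mul hx hx (by norm_num) (by linarith : (0 : ℝ) ≤ x)]

lemma two_le_rpow_one_div_three : (2 : ℝ) ≤ 31 ^ ((1 : ℝ) / 3) := by
  rw [one_div, Real.le_rpow_inv_iff_of_pos (by norm_num) (by norm_num) (by norm_num)]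
  norm_num

lemma f_natCast_le_rpow {m : ℕ} (hm : 3 ≤ m) : f m ≤ (31 : ℝ) ^ ((m : ℝ) / 3) := by
  induction m, hm using Nat.le_induction with
  | base => norm_num [f]
  | succ m hm ih =>
    have hm' : (3 : ℝ) ≤ m := by exact_mod_cast hm
    calc f ((m + 1 : ℕ) : ℝ) ≤ 2 * f m := by push_cast; exact f_add_one_le_two_mul hm'
      _ ≤ 31 ^ ((1 : ℝ) / 3) * 31 ^ ((m : ℝ) / 3) :=
        mul_le_mul two_le_rpow_one_div_three ih (f_pos (by linarith)).le (by positivity)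
      _ = 31 ^ (((m + 1 : ℕ) : ℝ) / 3) := by
        rw [← Real.rpow_add (by norm_num)]
        push_cast
        ring_nf

lemma f_natCast_le_f_one_mul_f_two_mul_rpow (m : ℕ) :
    f m ≤ f 1 * f 2 * (31 : ℝ) ^ ((m : ℝ) / 3) := by
  have hrpow : 1 ≤ (31 : ℝ) ^ ((m : ℝ) / 3) := Real.one_le_rpow (by norm_num) (by positivity)
  have hconst : f 1 * f 2 = 52 := by norm_num [f]
  rw [hconst]
  rcases lt_or_ge m 3 with hm | hm
  · have : f m ≤ 52 := by interval_cases m <;> norm_num [f]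
    nlinarith
  · nlinarith [f_natCast_le_rpow hm]

lemma prod_f_natCast_le_rpow {ι : Type*} {s : Finset ι} {a : ι → ℕ} (h : ∀ i ∈ s, 3 ≤ a i) :
    ∏ i ∈ s, f (a i) ≤ (31 : ℝ) ^ (((∑ i ∈ s, a i : ℕ) : ℝ) / 3) := by
  calc ∏ i ∈ s, f (a i) ≤ ∏ i ∈ s, (31 : ℝ) ^ ((a i : ℝ) / 3) :=
        prod_le_prod (fun i _ => (f_pos (Nat.cast_nonneg _)).le)
          fun i hi => f_natCast_le_rpow (h i hi)
    _ = (31 : ℝ) ^ (((∑ i ∈ s, a i : ℕ) : ℝ) / 3) := by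
        rw [← Real.rpow_sum_of_pos (by norm_num), Nat.cast_sum, sum_div]

lemma prod_f_natCast_le {ι : Type*} [DecidableEq ι] {s : Finset ι} {a : ι → ℕ}
    (h : ∀ i ∈ s, ∀ j ∈ s, a i < 3 → a j < 3 → i = j) :
    ∏ i ∈ s, f (a i) ≤ f 1 * f 2 * (31 : ℝ) ^ (((∑ i ∈ s, a i : ℕ) : ℝ) / 3) := by
  by_cases hsmall : ∃ j ∈ s, a j < 3
  · obtain ⟨j, hj, hja⟩ := hsmall
    have hrest : ∀ i ∈ s.erase j, 3 ≤ a i := fun i hi => by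
      by_contra! hia
      exact (mem_erase.mp hi).1 (h i (mem_of_mem_erase hi) j hj hia hja)
    rw [← prod_erase_mul s _ hj, ← sum_erase_add s _ hj, Nat.cast_add, add_div,
      Real.rpow_add (by norm_num), mul_left_comm]
    exact mul_le_mul (prod_f_natCast_le_rpow hrest) (f_natCast_le_f_one_mul_f_two_mul_rpow _)
      (f_pos (Nat.cast_nonneg _)).le (by positivity)
  · push Not at hsmall
    have hconst : 1 ≤ f 1 * f 2 := by norm_num [f]
    calc ∏ i ∈ s, f (a i) ≤ (31 : ℝ) ^ (((∑ i ∈ s, a i : ℕ) : ℝ) / 3) :=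
          prod_f_natCast_le_rpow hsmall
      _ ≤ f 1 * f 2 * (31 : ℝ) ^ (((∑ i ∈ s, a i : ℕ) : ℝ) / 3) :=
          le_mul_of_one_le_left (by positivity) hconst

theorem prod_f_le_const_mul_general (n k : ℕ) (a : Fin k → ℕ)
    (hmost : ∀ i : Fin k, (i : ℕ) < k - 1 → 3 ≤ a i)
    (hsum : ∑ i, a i = n) :
    ∏ i, f ((a i : ℝ)) ≤ f 1 * f 2 * (31 : ℝ) ^ ((n : ℝ) / 3) := by
  have hsmall_eq_last : ∀ i : Fin k, a i < 3 → (i : ℕ) = k - 1 := fun i hi => by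
    have := mt (hmost i) (by omega)
    omega
  rw [← hsum]
  exact prod_f_natCast_le fun i _ j _ hi hj =>
    Fin.ext ((hsmall_eq_last i hi).trans (hsmall_eq_last j hj).symm)

/-- If the onion-layer sizes `n₁, …, n_k` sum to `n`, every layer except
possibly the last has at least 3 points, and the last is nonempty, then
`∏ᵢ f(nᵢ) ≤ f(1)·f(2)·31^(n/3) = O(31^(n/3))`. -/
theorem prod_f_le_const_mul (n k : ℕ) (hk : 0 < k) (a : Fin k → ℕ)
    (hmost : ∀ i : Fin k, (i : ℕ) < k - 1 → 3 ≤ a i)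
    (hlast : 1 ≤ a ⟨k - 1, Nat.sub_lt hk one_pos⟩)
    (hsum : ∑ i, a i = n) :
    ∏ i, f ((a i : ℝ)) ≤ f 1 * f 2 * (31 : ℝ) ^ ((n : ℝ) / 3) :=
  prod_f_le_const_mul_general n k a hmost hsum
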